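/- arXiv:2202.03821 — 11 statements merged into one kernel-verified Lean document; each statement's English description precedes it below -/
import Mathlib

section
/- If G is a connected graph on n vertices with minimum degree at least 3, then F(G) ≥ ⌊n/2⌋. -/
open SimpleGraph

variable {V : Type*}

/-- Closure of the filled set `S` under the zero forcing color change rule:
a filled vertex with exactly one unfilled neighbor fills that neighbor. -/
inductive ZFDerived (G : SimpleGraph V) (S : Set V) : V → Prop
  | init {v : V} : v ∈ S → ZFDerived G S v
  | force {v w : V} : ZFDerived G S v → G.Adj v w →
      (∀ u, G.Adj v u → u ≠ w → ZFDerived G S u) → ZFDerived G S w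

/-- The derived set of `S`. -/
def ZFDerivedSet (G : SimpleGraph V) (S : Set V) : Set V := {v | ZFDerived G S v}

/-- `S` is a zero forcing set if its derived set is all of `V`. -/
def IsZeroForcing (G : SimpleGraph V) (S : Set V) : Prop :=
  ZFDerivedSet G S = Set.univ

/-- `S` is a failed zero forcing set if its derived set is not all of `V`. -/
def IsFailed (G : SimpleGraph V) (S : Set V) : Prop :=
  ZFDerivedSet G S ≠ Set.univ

/-- The failed zero forcing number `F(G)`: the maximum size of a failed zero forcing set. -/
noncomputable def failedZF (G : SimpleGraph V) : ℕ :=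
  sSup {k | ∃ S : Finset V, IsFailed G ↑S ∧ S.card = k}

/-- The zero forcing number `Z(G)`: the minimum size of a zero forcing set. -/
noncomputable def zfNum (G : SimpleGraph V) : ℕ :=
  sInf {k | ∃ S : Finset V, IsZeroForcing G ↑S ∧ S.card = k}

section Aux

variable [Fintype V] [DecidableEq V] (G : SimpleGraph V) [DecidableRel G.Adj]

/-- The neighborhood of `v` as a Finset. -/
def nbr (v : V) : Finset V := Finset.univ.filter (G.Adj v)

lemma mem_nbr {v u : V} : u ∈ nbr G v ↔ G.Adj v u := by simp [nbr]

lemma not_self_mem_nbr (v : V) : v ∉ nbr G v := by simp [nbr]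

lemma mem_nbr_comm {v u : V} : u ∈ nbr G v ↔ v ∈ nbr G u := by
  simp [nbr, G.adj_comm]

/-- Number of cut edges from `A` to its complement. -/
def cut (A : Finset V) : ℕ := ∑ v ∈ A, (nbr G v \ A).card

lemma cut_erase {A : Finset V} {v : V} (hv : v ∈ A) :
    cut G (A.erase v) + (nbr G v \ A).card = cut G A + (nbr G v ∩ A).card := by
  have hstep : ∀ u ∈ A.erase v,
      (nbr G u \ A.erase v).card = (nbr G u \ A).card + (if v ∈ nbr G u then 1 else 0) := by
    intro u hu
    by_cases hvn : v ∈ nbr G u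
    · have heq : nbr G u \ A.erase v = insert v (nbr G u \ A) := by
        ext x
        simp only [Finset.mem_sdiff, Finset.mem_erase, Finset.mem_insert, not_and]
        constructor
        · rintro ⟨hx, h2⟩
          by_cases hxv : x = v
          · exact Or.inl hxv
          · exact Or.inr ⟨hx, fun hxA => hxv (by by_contra h; exact (h2 h hxA).elim)⟩
        · rintro (rfl | ⟨hx, hxA⟩)
          · exact ⟨hvn, fun h => absurd rfl h⟩
          · exact ⟨hx, fun _ h => absurd h hxA⟩
      rw [heq, Finset.card_insert_of_notMem (by simp [hv]), if_pos hvn]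
    · have heq : nbr G u \ A.erase v = nbr G u \ A := by
        ext x
        simp only [Finset.mem_sdiff, Finset.mem_erase, not_and]
        constructor
        · rintro ⟨hx, h2⟩
          refine ⟨hx, fun hxA => ?_⟩
          have hxv : x ≠ v := by rintro rfl; exact hvn hx
          exact (h2 hxv hxA).elim
        · rintro ⟨hx, hxA⟩
          exact ⟨hx, fun _ h => absurd h hxA⟩
      rw [heq, if_neg hvn, Nat.add_zero]
  have hsum : cut G (A.erase v)
      = ∑ u ∈ A.erase v, (nbr G u \ A).card + (nbr G v ∩ A).card := by
    rw [cut, Finset.sum_congr rfl hstep, Finset.sum_add_distrib]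
    congr 1
    have : (∑ u ∈ A.erase v, if v ∈ nbr G u then (1 : ℕ) else 0)
        = ((A.erase v).filter (fun u => v ∈ nbr G u)).card := by
      exact_mod_cast Finset.sum_boole _ _
    rw [this]
    have : (A.erase v).filter (fun u => v ∈ nbr G u)
        = (A.erase v).filter (fun u => u ∈ nbr G v) := by
      apply Finset.filter_congr; intro u _; simp [mem_nbr_comm]
    rw [this, Finset.filter_mem_eq_inter]
    congr 1
    ext x
    simp only [Finset.mem_inter, Finset.mem_erase]
    constructor
    · rintro ⟨⟨_, h1⟩, h2⟩; exact ⟨h2, h1⟩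
    · rintro ⟨h2, h1⟩
      refine ⟨⟨?_, h1⟩, h2⟩
      rintro rfl; exact not_self_mem_nbr G x h2
  have hsum2 : cut G A = (nbr G v \ A).card + ∑ u ∈ A.erase v, (nbr G u \ A).card :=
    (Finset.add_sum_erase A _ hv).symm
  omega

lemma cut_insert {A : Finset V} {v : V} (hv : v ∉ A) :
    cut G (insert v A) + (nbr G v ∩ A).card = cut G A + (nbr G v \ A).card := by
  have hstep : ∀ u ∈ A,
      (nbr G u \ A).card = (nbr G u \ insert v A).card + (if v ∈ nbr G u then 1 else 0) := by
    intro u hu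
    by_cases hvn : v ∈ nbr G u
    · have heq : nbr G u \ A = insert v (nbr G u \ insert v A) := by
        ext x
        simp only [Finset.mem_sdiff, Finset.mem_insert, not_or]
        constructor
        · rintro ⟨hx, hxA⟩
          by_cases hxv : x = v
          · exact Or.inl hxv
          · exact Or.inr ⟨hx, hxv, hxA⟩
        · rintro (rfl | ⟨hx, _, hxA⟩)
          · exact ⟨hvn, hv⟩
          · exact ⟨hx, hxA⟩
      rw [heq, Finset.card_insert_of_notMem (by simp), if_pos hvn]
    · have heq : nbr G u \ A = nbr G u \ insert v A := by
        ext x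
        simp only [Finset.mem_sdiff, Finset.mem_insert, not_or]
        constructor
        · rintro ⟨hx, hxA⟩
          refine ⟨hx, ?_, hxA⟩
          rintro rfl; exact hvn hx
        · rintro ⟨hx, _, hxA⟩; exact ⟨hx, hxA⟩
      rw [← heq, if_neg hvn, Nat.add_zero]
  have hsum : cut G A = ∑ u ∈ A, (nbr G u \ insert v A).card + (nbr G v ∩ A).card := by
    rw [cut, Finset.sum_congr rfl hstep, Finset.sum_add_distrib]
    congr 1
    have : (∑ u ∈ A, if v ∈ nbr G u then (1 : ℕ) else 0)
        = (A.filter (fun u => v ∈ nbr G u)).card := by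
      exact_mod_cast Finset.sum_boole _ _
    rw [this]
    have : A.filter (fun u => v ∈ nbr G u) = A.filter (fun u => u ∈ nbr G v) := by
      apply Finset.filter_congr; intro u _; simp [mem_nbr_comm]
    rw [this, Finset.filter_mem_eq_inter, Finset.inter_comm]
  have hveq : nbr G v \ insert v A = nbr G v \ A := by
    ext x
    simp only [Finset.mem_sdiff, Finset.mem_insert, not_or]
    constructor
    · rintro ⟨hx, _, hxA⟩; exact ⟨hx, hxA⟩
    · rintro ⟨hx, hxA⟩
      refine ⟨hx, ?_, hxA⟩
      rintro rfl; exact not_self_mem_nbr G x hx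
  have hsum2 : cut G (insert v A)
      = (nbr G v \ A).card + ∑ u ∈ A, (nbr G u \ insert v A).card := by
    rw [cut, Finset.sum_insert hv, hveq]
  omega

/-- A fort (every outside vertex has at least two neighbors inside) is never reached
by the zero forcing process started from its complement. -/
lemma fort_not_derived (F : Finset V)
    (hfort : ∀ v, v ∉ F → 2 ≤ (nbr G v ∩ F).card) :
    ∀ w, ZFDerived G (↑(Fᶜ) : Set V) w → w ∉ F := by
  intro w hw
  induction hw with
  | init h => simpa using h
  | @force v w hv hadj hall ihv ihall =>
    intro hwF
    have h2 := hfort v ihv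
    obtain ⟨u, hu, hune⟩ := Finset.exists_mem_ne (lt_of_lt_of_le one_lt_two h2) w
    have huv : G.Adj v u := (mem_nbr G).1 (Finset.mem_inter.1 hu).1
    exact ihall u huv hune (Finset.mem_inter.1 hu).2

lemma failed_of_fort (F : Finset V) (hne : F.Nonempty)
    (hfort : ∀ v, v ∉ F → 2 ≤ (nbr G v ∩ F).card) :
    IsFailed G (↑(Fᶜ) : Set V) := by
  obtain ⟨x, hx⟩ := hne
  intro hEq
  have hmem : x ∈ ZFDerivedSet G (↑(Fᶜ) : Set V) := hEq ▸ Set.mem_univ x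
  exact fort_not_derived G F hfort x hmem hx

end Aux

theorem failedZF_ge_of_minDegree_three {V : Type*} [Fintype V] (G : SimpleGraph V)
    (hconn : G.Connected) (hδ : ∀ v, 3 ≤ (G.neighborSet v).ncard) :
    Fintype.card V / 2 ≤ failedZF G := by
  classical
  have hδ' : ∀ v, 3 ≤ (nbr G v).card := by
    intro v
    have hset : G.neighborSet v = ↑(nbr G v) := by
      ext u; simp [nbr, mem_neighborSet]
    have := hδ v
    rwa [hset, Set.ncard_coe_finset] at this
  rcases Nat.eq_zero_or_pos (Fintype.card V) with h0 | hpos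
  · rw [h0]; exact Nat.zero_le _
  have : Nonempty V := Fintype.card_pos_iff.mp hpos
  obtain ⟨x⟩ := this
  -- take a maximum cut
  obtain ⟨A, -, hA⟩ := Finset.exists_max_image (Finset.univ : Finset (Finset V)) (cut G)
    ⟨∅, Finset.mem_univ ∅⟩
  have hmax : ∀ B, cut G B ≤ cut G A := fun B => hA B (Finset.mem_univ B)
  have hout : ∀ v ∈ A, 2 ≤ (nbr G v \ A).card := by
    intro v hv
    have h1 := cut_erase G hv
    have h2 := hmax (A.erase v)
    have h3 := Finset.card_inter_add_card_sdiff (nbr G v) A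
    have h4 := hδ' v
    omega
  have hin : ∀ v, v ∉ A → 2 ≤ (nbr G v ∩ A).card := by
    intro v hv
    have h1 := cut_insert G hv
    have h2 := hmax (insert v A)
    have h3 := Finset.card_inter_add_card_sdiff (nbr G v) A
    have h4 := hδ' v
    omega
  have bdd : BddAbove {k | ∃ S : Finset V, IsFailed G ↑S ∧ S.card = k} := by
    refine ⟨Fintype.card V, ?_⟩
    rintro k ⟨S, -, rfl⟩
    exact Finset.card_le_univ S
  by_cases hcase : Fintype.card V / 2 ≤ A.card
  · -- use A as failed set; Aᶜ is a fort
    have hfort : ∀ v, v ∉ (Aᶜ : Finset V) → 2 ≤ (nbr G v ∩ Aᶜ).card := by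
      intro v hv
      rw [Finset.mem_compl, not_not] at hv
      have : nbr G v ∩ Aᶜ = nbr G v \ A := by
        ext u; simp [Finset.mem_sdiff]
      rw [this]
      exact hout v hv
    have hneC : (Aᶜ : Finset V).Nonempty := by
      by_contra h
      rw [Finset.not_nonempty_iff_eq_empty, Finset.compl_eq_empty_iff] at h
      have := hout x (h ▸ Finset.mem_univ x)
      rw [h, Finset.sdiff_eq_empty_iff_subset.mpr (Finset.subset_univ _)] at this
      simp at this
    have hfail := failed_of_fort G Aᶜ hneC hfort
    rw [compl_compl] at hfail
    exact le_trans hcase (le_csSup bdd ⟨A, hfail, rfl⟩)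
  · -- use Aᶜ as failed set; A is a fort
    have hneA : A.Nonempty := by
      by_contra h
      rw [Finset.not_nonempty_iff_eq_empty] at h
      have := hin x (by simp [h])
      simp [h] at this
    have hfail := failed_of_fort G A hneA hin
    have hcard : Fintype.card V / 2 ≤ (Aᶜ : Finset V).card := by
      have h1 := Finset.card_compl A
      have h2 := Finset.card_le_univ A
      omega
    exact le_trans hcard (le_csSup bdd ⟨Aᶜ, hfail, rfl⟩)
end

section
/- If G is a connected graph on n vertices with minimum degree at least 3 that contains a cycle of even length, then F(G) ≥ ⌈n/2⌉. -/
open SimpleGraph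

variable {V : Type*}

section Aux

open Finset

variable [Fintype V] [DecidableEq V] (G : SimpleGraph V) [DecidableRel G.Adj]

/-- number of neighbors of `x` with the opposite color. -/
private def gcut (f : V → Bool) (x : V) : ℕ :=
  ((G.neighborFinset x).filter (fun y => f y ≠ f x)).card

/-- twice the cut size of the 2-coloring `f`. -/
private def cutw (f : V → Bool) : ℕ := ∑ x, gcut G f x

private lemma flip_eq (f : V → Bool) (v : V) :
    cutw G (Function.update f v (!f v)) + 2 * gcut G f v
      = cutw G f + gcut G (Function.update f v (!f v)) v
        + ((G.neighborFinset v).filter (fun x => f x = f v)).card := by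
  set f' := Function.update f v (!f v) with hf'
  have hvv : v ∉ G.neighborFinset v := by simp
  have expand : ∀ g : V → ℕ, ∑ x, g x
      = g v + (∑ x ∈ G.neighborFinset v, g x)
        + ∑ x ∈ univ \ insert v (G.neighborFinset v), g x := by
    intro g
    rw [← Finset.sum_sdiff (Finset.subset_univ (insert v (G.neighborFinset v))),
      Finset.sum_insert hvv]
    omega
  have e1 := expand (gcut G f')
  have e2 := expand (gcut G f)
  have h3 : ∑ x ∈ univ \ insert v (G.neighborFinset v), gcut G f' x
      = ∑ x ∈ univ \ insert v (G.neighborFinset v), gcut G f x := by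
    apply Finset.sum_congr rfl
    intro x hx
    simp only [Finset.mem_sdiff, Finset.mem_insert, not_or] at hx
    obtain ⟨-, hxv, hxN⟩ := hx
    have hvN : v ∉ G.neighborFinset x := by
      simp only [mem_neighborFinset] at hxN ⊢
      exact fun h => hxN h.symm
    unfold gcut
    congr 1
    apply Finset.filter_congr
    intro y hy
    have hyv : y ≠ v := fun h => hvN (h ▸ hy)
    rw [hf', Function.update_of_ne hyv, Function.update_of_ne hxv]
  have h2 : ∀ x ∈ G.neighborFinset v,
      gcut G f' x + (if f x ≠ f v then 1 else 0)
        = gcut G f x + (if f x = f v then 1 else 0) := by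
    intro x hx
    have hxv : x ≠ v := fun h => hvv (h ▸ hx)
    have hvNx : v ∈ G.neighborFinset x := by
      rw [mem_neighborFinset] at hx ⊢; exact hx.symm
    unfold gcut
    rw [← Finset.insert_erase hvNx, Finset.filter_insert, Finset.filter_insert]
    have hvs : v ∉ (G.neighborFinset x).erase v := Finset.notMem_erase _ _
    have hfe : ((G.neighborFinset x).erase v).filter (fun y => f' y ≠ f' x)
        = ((G.neighborFinset x).erase v).filter (fun y => f y ≠ f x) := by
      apply Finset.filter_congr
      intro y hy
      have hyv : y ≠ v := Finset.ne_of_mem_erase hy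
      rw [hf', Function.update_of_ne hyv, Function.update_of_ne hxv]
    have hux : f' x = f x := Function.update_of_ne hxv _ _
    have huv : f' v = !f v := Function.update_self _ _ _
    by_cases h : f x = f v
    · have hc1 : ¬ (f v ≠ f x) := by simp [h]
      have hc2 : (f' v ≠ f' x) := by rw [huv, hux, ← h]; cases f x <;> simp
      rw [if_pos hc2, if_neg hc1, if_neg (by simp [h]), if_pos h, hfe,
        Finset.card_insert_of_notMem (fun hc => hvs (Finset.mem_of_mem_filter _ hc))]
    · have hc1 : (f v ≠ f x) := fun hc => h hc.symm
      have hc2 : ¬ (f' v ≠ f' x) := by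
        rw [huv, hux]
        revert hc1; cases f x <;> cases f v <;> simp
      rw [if_neg hc2, if_pos hc1, if_pos (fun hc => h hc), if_neg h, hfe,
        Finset.card_insert_of_notMem (fun hc => hvs (Finset.mem_of_mem_filter _ hc))]
  have hsum : (∑ x ∈ G.neighborFinset v, gcut G f' x)
        + ∑ x ∈ G.neighborFinset v, (if f x ≠ f v then 1 else 0)
      = (∑ x ∈ G.neighborFinset v, gcut G f x)
        + ∑ x ∈ G.neighborFinset v, (if f x = f v then 1 else 0) := by
    rw [← Finset.sum_add_distrib, ← Finset.sum_add_distrib]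
    exact Finset.sum_congr rfl h2
  have hA : ∑ x ∈ G.neighborFinset v, (if f x ≠ f v then 1 else 0) = gcut G f v := by
    unfold gcut; rw [Finset.card_filter]
  have hB : ∑ x ∈ G.neighborFinset v, (if f x = f v then 1 else 0)
      = ((G.neighborFinset v).filter (fun x => f x = f v)).card := by
    rw [Finset.card_filter]
  unfold cutw
  omega

private lemma exists_good_coloring (hδ : ∀ v, 3 ≤ (G.neighborFinset v).card) :
    ∃ f : V → Bool, ∀ v,
      2 ≤ ((G.neighborFinset v).filter (fun y => f y ≠ f v)).card := by
  obtain ⟨f, -, hf⟩ := Finset.exists_max_image (Finset.univ : Finset (V → Bool))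
    (cutw G) ⟨fun _ => true, Finset.mem_univ _⟩
  refine ⟨f, fun v => ?_⟩
  have h1 := flip_eq G f v
  set f' := Function.update f v (!f v) with hf'
  have hvv : v ∉ G.neighborFinset v := by simp
  have hmax : cutw G f' ≤ cutw G f := hf _ (Finset.mem_univ _)
  have hg : gcut G f' v = ((G.neighborFinset v).filter (fun x => f x = f v)).card := by
    unfold gcut
    congr 1
    apply Finset.filter_congr
    intro y hy
    have hyv : y ≠ v := fun h => hvv (h ▸ hy)
    rw [hf', Function.update_of_ne hyv, Function.update_self]
    cases f y <;> cases f v <;> simp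
  have hsplit : ((G.neighborFinset v).filter (fun x => f x = f v)).card
      + ((G.neighborFinset v).filter (fun y => f y ≠ f v)).card
      = (G.neighborFinset v).card :=
    Finset.card_filter_add_card_filter_not (fun x => f x = f v)
  have hdeg := hδ v
  have ha : gcut G f v = ((G.neighborFinset v).filter (fun y => f y ≠ f v)).card := rfl
  omega

private lemma derived_not_mem (T : Set V)
    (hfort : ∀ v ∉ T, ∀ w ∈ T, G.Adj v w → ∃ u, u ∈ T ∧ G.Adj v u ∧ u ≠ w) :
    ∀ v, ZFDerived G Tᶜ v → v ∉ T := by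
  intro v h
  induction h with
  | init hv => exact hv
  | @force v w _ hadj _ ihv ihall =>
      intro hwT
      obtain ⟨u, huT, hadju, hne⟩ := hfort v ihv w hwT hadj
      exact ihall u hadju hne huT

end Aux

theorem failedZF_ge_of_minDegree_three_even_cycle {V : Type*} [Fintype V]
    (G : SimpleGraph V) (hconn : G.Connected) (hδ : ∀ v, 3 ≤ (G.neighborSet v).ncard)
    (hcyc : ∃ (u : V) (c : G.Walk u u), c.IsCycle ∧ Even c.length) :
    (Fintype.card V + 1) / 2 ≤ failedZF G := by
  classical
  have hne : Nonempty V := hconn.nonempty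
  have hδ' : ∀ v, 3 ≤ (G.neighborFinset v).card := by
    intro v
    have h := hδ v
    rw [SimpleGraph.neighborFinset_def, ← Set.ncard_eq_toFinset_card']
    exact h
  obtain ⟨f, hf⟩ := exists_good_coloring G hδ'
  -- choose the smaller color class
  obtain ⟨b, hb⟩ : ∃ b : Bool,
      2 * (Finset.univ.filter (fun v => f v = b)).card ≤ Fintype.card V := by
    have hpart : (Finset.univ.filter (fun v => f v = true)).card
        + (Finset.univ.filter (fun v => f v = false)).card = Fintype.card V := by
      rw [← Finset.card_univ]
      have := Finset.card_filter_add_card_filter_not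
        (s := (Finset.univ : Finset V)) (p := fun v => f v = true)
      simpa using this
    rcases le_total (Finset.univ.filter (fun v => f v = true)).card
        (Finset.univ.filter (fun v => f v = false)).card with h | h
    · exact ⟨true, by omega⟩
    · exact ⟨false, by omega⟩
  set T : Finset V := Finset.univ.filter (fun v => f v = b) with hT
  -- every vertex not in T has at least 2 neighbors in T
  have hfort2 : ∀ v ∉ T, 2 ≤ ((G.neighborFinset v).filter (fun y => y ∈ T)).card := by
    intro v hv
    refine le_trans (hf v) (Finset.card_le_card ?_)
    intro y hy
    rw [Finset.mem_filter] at hy ⊢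
    refine ⟨hy.1, ?_⟩
    have hvb : f v ≠ b := by
      intro h
      exact hv (by rw [hT]; exact Finset.mem_filter.mpr ⟨Finset.mem_univ _, h⟩)
    rw [hT, Finset.mem_filter]
    refine ⟨Finset.mem_univ _, ?_⟩
    have := hy.2
    revert this hvb
    cases f y <;> cases f v <;> cases b <;> simp
  -- T is nonempty
  have hTne : T.Nonempty := by
    obtain ⟨v⟩ := hne
    by_cases hv : v ∈ T
    · exact ⟨v, hv⟩
    · have h2 := hfort2 v hv
      have : ((G.neighborFinset v).filter (fun y => y ∈ T)).Nonempty := by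
        rw [← Finset.card_pos]; omega
      obtain ⟨y, hy⟩ := this
      exact ⟨y, (Finset.mem_filter.mp hy).2⟩
  -- fort property in the form needed
  have hfort : ∀ v ∉ (↑T : Set V), ∀ w ∈ (↑T : Set V), G.Adj v w →
      ∃ u, u ∈ (↑T : Set V) ∧ G.Adj v u ∧ u ≠ w := by
    intro v hv w hw hadj
    have h2 := hfort2 v (by simpa using hv)
    have h2' : 1 < ((G.neighborFinset v).filter (fun y => y ∈ T)).card := by omega
    obtain ⟨a, ha, c, hc, hac⟩ := Finset.one_lt_card.mp h2'
    rw [Finset.mem_filter, SimpleGraph.mem_neighborFinset] at ha hc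
    by_cases haw : a = w
    · exact ⟨c, by simpa using hc.2, hc.1, fun h => hac (haw ▸ h ▸ rfl)⟩
    · exact ⟨a, by simpa using ha.2, ha.1, haw⟩
  -- the complement of T is a failed set
  have hfailed : IsFailed G ↑(Tᶜ : Finset V) := by
    intro hcontra
    obtain ⟨t, ht⟩ := hTne
    have hder : ZFDerived G ↑(Tᶜ : Finset V) t := by
      have : t ∈ ZFDerivedSet G ↑(Tᶜ : Finset V) := by rw [hcontra]; trivial
      exact this
    rw [show ((↑(Tᶜ : Finset V) : Set V)) = (↑T : Set V)ᶜ by simp] at hder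
    exact derived_not_mem G (↑T : Set V) hfort t hder (by simpa using ht)
  -- conclude
  have hmem : (Tᶜ : Finset V).card ∈ {k | ∃ S : Finset V, IsFailed G ↑S ∧ S.card = k} :=
    ⟨Tᶜ, hfailed, rfl⟩
  have hbdd : BddAbove {k | ∃ S : Finset V, IsFailed G ↑S ∧ S.card = k} := by
    refine ⟨Fintype.card V, ?_⟩
    rintro k ⟨S, -, rfl⟩
    exact Finset.card_le_univ S
  have hle : (Fintype.card V + 1) / 2 ≤ (Tᶜ : Finset V).card := by
    have hcc : (Tᶜ : Finset V).card = Fintype.card V - T.card := Finset.card_compl T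
    have hTle : T.card ≤ Fintype.card V := Finset.card_le_univ T
    omega
  exact le_trans hle (le_csSup hbdd hmem)
end

section
/- If G is a bipartite graph with bipartition V = L ⊔ R and minimum degree at least 2, then F(G) ≥ max{|L|, |R|}. -/
open SimpleGraph

variable {V : Type*}

/-!
Each side of the bipartition is an independent set all of whose vertices have at least two
neighbours. Such a set cannot force anything: a filled vertex `v` of it has at least two
neighbours, all on the other side and hence unfilled. So its derived set is itself, which is
proper as soon as the set is nonempty (a vertex of it has a neighbour outside it).
-/

namespace SimpleGraph

variable {G : SimpleGraph V} {S : Set V}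

theorem zfDerivedSet_eq_of_isIndepSet (hS : G.IsIndepSet S)
    (hdeg : ∀ v ∈ S, (G.neighborSet v).Nontrivial) : ZFDerivedSet G S = S := by
  refine Set.Subset.antisymm (fun w hw => ?_) fun _ => ZFDerived.init
  induction hw with
  | init h => exact h
  | @force v w _ hvw _ hvS hnbrS =>
    obtain ⟨u, hvu, huw⟩ := (hdeg v hvS).exists_ne w
    exact absurd hvu (hS hvS (hnbrS u hvu huw) (G.ne_of_adj hvu))

theorem isFailed_of_isIndepSet (hS : G.IsIndepSet S)
    (hdeg : ∀ v ∈ S, (G.neighborSet v).Nontrivial) (hne : S.Nonempty) : IsFailed G S := by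
  obtain ⟨v, hv⟩ := hne
  obtain ⟨u, hvu⟩ := (hdeg v hv).nonempty
  intro huniv
  have hu : u ∈ S := zfDerivedSet_eq_of_isIndepSet hS hdeg ▸ huniv ▸ Set.mem_univ u
  exact hS hv hu (G.ne_of_adj hvu) hvu

theorem card_le_failedZF [Fintype V] {S : Finset V} (hS : IsFailed G S) :
    S.card ≤ failedZF G :=
  le_csSup ⟨Fintype.card V, fun _ ⟨T, _, hT⟩ => hT ▸ T.card_le_univ⟩ ⟨S, hS, rfl⟩

theorem card_le_failedZF_of_isIndepSet [Fintype V] {S : Finset V} (hS : G.IsIndepSet S)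
    (hdeg : ∀ v ∈ S, (G.neighborSet v).Nontrivial) : S.card ≤ failedZF G := by
  rcases S.eq_empty_or_nonempty with rfl | hne
  · exact Nat.zero_le _
  · exact card_le_failedZF (isFailed_of_isIndepSet hS hdeg (by exact_mod_cast hne))

end SimpleGraph

theorem failedZF_ge_of_bipartite_general {V : Type*} [Fintype V]
    (G : SimpleGraph V) (L R : Finset V)
    (hdisj : Disjoint L R)
    (hbip : ∀ a b, G.Adj a b → (a ∈ L ∧ b ∈ R) ∨ (a ∈ R ∧ b ∈ L))
    (hδ : ∀ v, 2 ≤ (G.neighborSet v).ncard) :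
    max L.card R.card ≤ failedZF G := by
  have hdeg : ∀ v, (G.neighborSet v).Nontrivial := fun v =>
    Set.one_lt_ncard_iff_nontrivial.mp (hδ v)
  have hL : G.IsIndepSet (L : Set V) := fun a ha b hb _ hab => by
    rcases hbip a b hab with ⟨-, hbR⟩ | ⟨haR, -⟩
    · exact Finset.disjoint_left.mp hdisj hb hbR
    · exact Finset.disjoint_left.mp hdisj ha haR
  have hR : G.IsIndepSet (R : Set V) := fun a ha b hb _ hab => by
    rcases hbip a b hab with ⟨haL, -⟩ | ⟨-, hbL⟩
    · exact Finset.disjoint_left.mp hdisj haL ha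
    · exact Finset.disjoint_left.mp hdisj hbL hb
  exact max_le (card_le_failedZF_of_isIndepSet hL fun v _ => hdeg v)
    (card_le_failedZF_of_isIndepSet hR fun v _ => hdeg v)

theorem failedZF_ge_of_bipartite {V : Type*} [Fintype V] [DecidableEq V]
    (G : SimpleGraph V) (L R : Finset V)
    (hunion : (↑L ∪ ↑R : Set V) = Set.univ) (hdisj : Disjoint L R)
    (hbip : ∀ a b, G.Adj a b → (a ∈ L ∧ b ∈ R) ∨ (a ∈ R ∧ b ∈ L))
    (hδ : ∀ v, 2 ≤ (G.neighborSet v).ncard) :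
    max L.card R.card ≤ failedZF G :=
  failedZF_ge_of_bipartite_general G L R hdisj hbip hδ
end

section
/- If G is a connected graph on n vertices with minimum degree at least 3 and connectivity κ(G) = 1 (i.e., G has a cut vertex), then F(G) ≥ ⌊(n+1)/2⌋. -/
open SimpleGraph

variable {V : Type*}

/-- If every vertex outside `T` that has a neighbor in `T` has a second neighbor in `T`,
then the complement of `T` stalls, hence is a failed zero forcing set (when `T ≠ ∅`). -/
lemma stalled_failed (G : SimpleGraph V) (T : Set V) (hT : T.Nonempty)
    (h : ∀ s, s ∉ T → ∀ w ∈ T, G.Adj s w → ∃ u ∈ T, G.Adj s u ∧ u ≠ w) :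
    IsFailed G (Tᶜ) := by
  have hsub : ∀ x, ZFDerived G (Tᶜ) x → x ∈ Tᶜ := by
    intro x hx
    induction hx with
    | init hmem => exact hmem
    | @force v w hv hadj hall ih ihall =>
      by_contra hwT
      simp only [Set.mem_compl_iff, not_not] at hwT
      obtain ⟨u, huT, huadj, hune⟩ := h v ih w hwT hadj
      exact ihall u huadj hune huT
  intro hcontra
  obtain ⟨t, ht⟩ := hT
  have : t ∈ ZFDerivedSet G (Tᶜ) := by rw [hcontra]; trivial
  exact hsub t this ht

/-- Key lemma: given a nonempty set `C` not containing `v`, closed under adjacency avoiding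
`v`, the complement of (essentially) `C` is a failed zero forcing set. -/
lemma key_failed [Fintype V] (G : SimpleGraph V)
    (hδ : ∀ v, 3 ≤ (G.neighborSet v).ncard)
    (v : V) (C : Set V) (hv : v ∉ C) (hCne : C.Nonempty)
    (hclosed : ∀ x ∈ C, ∀ y, y ≠ v → G.Adj x y → y ∈ C) :
    ∃ S : Finset V, IsFailed G ↑S ∧ Fintype.card V - C.ncard ≤ S.card := by
  classical
  -- a vertex outside C other than v has no neighbors in C
  have hout : ∀ s, s ∉ C → s ≠ v → ∀ w ∈ C, ¬ G.Adj s w := by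
    intro s hs hsv w hw hadj
    exact hs (hclosed w hw s hsv hadj.symm)
  have main : ∃ T : Set V, T.Nonempty ∧ T ⊆ C ∧ C.ncard ≤ T.ncard + 1 ∧
      (∀ s, s ∉ T → ∀ w ∈ T, G.Adj s w → ∃ u ∈ T, G.Adj s u ∧ u ≠ w) := by
    by_cases hu : ∃ u, u ∈ C ∧ G.Adj v u ∧ ∀ w ∈ C, G.Adj v w → w = u
    · obtain ⟨u, huC, huadj, huniq⟩ := hu
      -- u has at least two neighbors other than v, all inside C \ {u}
      have h2 : 1 < (G.neighborSet u \ {v}).ncard := by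
        have h3 := hδ u
        have hle : (G.neighborSet u).ncard ≤ (G.neighborSet u \ {v}).ncard + 1 := by
          by_cases hmem : v ∈ G.neighborSet u
          · have := Set.ncard_diff_singleton_add_one (s := G.neighborSet u) (a := v) hmem
              (Set.toFinite _)
            omega
          · rw [Set.diff_singleton_eq_self hmem]; omega
        omega
      obtain ⟨w₁, hw₁, w₂, hw₂, hwne⟩ := (Set.one_lt_ncard (Set.toFinite _)).mp h2
      have hmemT : ∀ w, w ∈ G.neighborSet u \ {v} → w ∈ C \ {u} := by
        rintro w ⟨hwadj, hwv⟩
        refine ⟨hclosed u huC w (by simpa using hwv) hwadj, ?_⟩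
        simp only [Set.mem_singleton_iff]
        intro h
        subst h
        exact G.irrefl hwadj
      refine ⟨C \ {u}, ⟨w₁, hmemT w₁ hw₁⟩, Set.diff_subset, ?_, ?_⟩
      · have := Set.ncard_diff_singleton_add_one huC (Set.toFinite C)
        omega
      · intro s hs w hw hadj
        by_cases hsu : s = u
        · subst hsu
          by_cases hww : w = w₁
          · refine ⟨w₂, hmemT w₂ hw₂, hw₂.1, ?_⟩
            rw [hww]
            exact hwne.symm
          · exact ⟨w₁, hmemT w₁ hw₁, hw₁.1, fun h => hww h.symm⟩
        · by_cases hsv : s = v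
          · subst hsv
            refine absurd (huniq w hw.1 hadj) ?_
            simpa using hw.2
          · have hsC : s ∉ C := fun hsC => hs ⟨hsC, hsu⟩
            exact absurd hadj (hout s hsC hsv w hw.1)
    · refine ⟨C, hCne, le_refl _, by omega, ?_⟩
      intro s hs w hw hadj
      by_cases hsv : s = v
      · subst hsv
        push_neg at hu
        obtain ⟨w', hw'C, hw'adj, hne⟩ := hu w hw hadj
        exact ⟨w', hw'C, hw'adj, hne⟩
      · exact absurd hadj (hout s hs hsv w hw)
  obtain ⟨T, hTne, hTC, hcard, hcond⟩ := main
  refine ⟨(Tᶜ : Set V).toFinset, ?_, ?_⟩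
  · rw [Set.coe_toFinset]
    exact stalled_failed G T hTne hcond
  · have h1 : (Tᶜ : Set V).toFinset.card = (Tᶜ : Set V).ncard :=
      (Set.ncard_eq_toFinset_card' _).symm
    have h2 : T.ncard + (Tᶜ : Set V).ncard = Fintype.card V := by
      rw [Set.ncard_add_ncard_compl, Nat.card_eq_fintype_card]
    have h3 : T.ncard ≤ C.ncard := Set.ncard_le_ncard hTC (Set.toFinite C)
    omega

theorem failedZF_ge_of_cut_vertex {V : Type*} [Fintype V] (G : SimpleGraph V)
    (hconn : G.Connected) (hδ : ∀ v, 3 ≤ (G.neighborSet v).ncard)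
    (hκ : ∃ v : V, ¬ (G.induce ({v}ᶜ : Set V)).Connected) :
    (Fintype.card V + 1) / 2 ≤ failedZF G := by
  classical
  obtain ⟨v, hv⟩ := hκ
  set H := G.induce ({v}ᶜ : Set V) with hH
  -- {v}ᶜ is nonempty
  have hne : Nonempty ({v}ᶜ : Set V) := by
    have h3 := hδ v
    have : (G.neighborSet v).Nonempty := by
      rw [← Set.ncard_pos (Set.toFinite _)] at *; omega
    obtain ⟨w, hw⟩ := this
    exact ⟨⟨w, by simp [G.ne_of_adj hw.symm]⟩⟩
  have hpre : ¬ H.Preconnected := by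
    intro hp; exact hv ((connected_iff _).mpr ⟨hp, hne⟩)
  rw [SimpleGraph.Preconnected] at hpre
  push_neg at hpre
  obtain ⟨a, b, hab⟩ := hpre
  set A : Set V := {w | ∃ h : w ∈ ({v}ᶜ : Set V), H.Reachable a ⟨w, h⟩} with hA
  set B : Set V := ({v}ᶜ : Set V) \ A with hB
  have hvA : v ∉ A := by rintro ⟨h, -⟩; simp at h
  have hvB : v ∉ B := by rintro ⟨h, -⟩; simp at h
  have hadjlift : ∀ (x y : V) (hx : x ∈ ({v}ᶜ : Set V)) (hy : y ∈ ({v}ᶜ : Set V)),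
      G.Adj x y → H.Adj ⟨x, hx⟩ ⟨y, hy⟩ := by
    intro x y hx hy hxy
    exact hxy
  have hAclosed : ∀ x ∈ A, ∀ y, y ≠ v → G.Adj x y → y ∈ A := by
    rintro x ⟨hx, hreach⟩ y hyv hxy
    have hy : y ∈ ({v}ᶜ : Set V) := by simp [hyv]
    exact ⟨hy, hreach.trans (hadjlift x y hx hy hxy).reachable⟩
  have hBclosed : ∀ x ∈ B, ∀ y, y ≠ v → G.Adj x y → y ∈ B := by
    rintro x ⟨hx, hxA⟩ y hyv hxy
    have hy : y ∈ ({v}ᶜ : Set V) := by simp [hyv]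
    refine ⟨hy, fun hyA => hxA ?_⟩
    exact hAclosed y hyA x (by simpa using hx) hxy.symm
  have haA : (a : V) ∈ A := ⟨a.2, Reachable.refl a⟩
  have hbB : (b : V) ∈ B := by
    refine ⟨b.2, fun hbA => ?_⟩
    obtain ⟨h, hreach⟩ := hbA
    exact hab hreach
  have hABdisj : Disjoint A B := Set.disjoint_sdiff_right.mono_left (le_refl _)
  have hABsub : A ⊆ ({v}ᶜ : Set V) := fun x ⟨h, _⟩ => h
  have hcardsum : A.ncard + B.ncard = Fintype.card V - 1 := by
    have h1 : B.ncard = ({v}ᶜ : Set V).ncard - A.ncard := by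
      rw [hB, Set.ncard_diff hABsub (Set.toFinite _)]
    have h2 : ({v} : Set V).ncard + ({v}ᶜ : Set V).ncard = Fintype.card V := by
      rw [Set.ncard_add_ncard_compl, Nat.card_eq_fintype_card]
    have h3 : ({v} : Set V).ncard = 1 := Set.ncard_singleton v
    have h4 : A.ncard ≤ ({v}ᶜ : Set V).ncard :=
      Set.ncard_le_ncard hABsub (Set.toFinite _)
    omega
  have hn : 1 ≤ Fintype.card V := Fintype.card_pos_iff.mpr ⟨v⟩
  -- choose the smaller of A, B
  have hmain : ∃ C : Set V, v ∉ C ∧ C.Nonempty ∧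
      (∀ x ∈ C, ∀ y, y ≠ v → G.Adj x y → y ∈ C) ∧ 2 * C.ncard + 1 ≤ Fintype.card V := by
    rcases le_total A.ncard B.ncard with h | h
    · exact ⟨A, hvA, ⟨a, haA⟩, hAclosed, by omega⟩
    · exact ⟨B, hvB, ⟨b, hbB⟩, hBclosed, by omega⟩
  obtain ⟨C, hvC, hCne, hCclosed, hCcard⟩ := hmain
  obtain ⟨S, hSfailed, hScard⟩ := key_failed G hδ v C hvC hCne hCclosed
  have hmem : S.card ∈ {k | ∃ S : Finset V, IsFailed G ↑S ∧ S.card = k} :=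
    ⟨S, hSfailed, rfl⟩
  have hbdd : BddAbove {k | ∃ S : Finset V, IsFailed G ↑S ∧ S.card = k} := by
    refine ⟨Fintype.card V, ?_⟩
    rintro k ⟨S, -, rfl⟩
    exact Finset.card_le_univ S
  have := le_csSup hbdd hmem
  unfold failedZF
  omega
end

section
/- Let G be a connected graph with a cut vertex v, and let D₁ be a connected component of G − v of minimum order among all components. If every vertex of G has degree at least 3, then the set S consisting of v together with all vertices not in D₁ ∪ {v} is a failed zero forcing set: its derived set omits at least one vertex of D₁. -/
open SimpleGraph

variable {V : Type*}

theorem cut_vertex_failed_set {V : Type*} [Fintype V] (G : SimpleGraph V)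
    (hconn : G.Connected) (hδ : ∀ u, 3 ≤ (G.neighborSet u).ncard)
    (v : V) (hcut : ¬ (G.induce ({v}ᶜ : Set V)).Connected)
    (K : (G.induce ({v}ᶜ : Set V)).ConnectedComponent)
    (hmin : ∀ K' : (G.induce ({v}ᶜ : Set V)).ConnectedComponent,
      K.supp.ncard ≤ K'.supp.ncard) :
    ∃ u ∈ Subtype.val '' K.supp,
      u ∉ ZFDerivedSet G ({v} ∪ (Subtype.val '' K.supp ∪ {v})ᶜ) := by
  classical
  set D : Set V := Subtype.val '' K.supp with hD
  have hvD : v ∉ D := by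
    rintro ⟨a, -, ha⟩; exact a.2 (by simpa using ha)
  -- edges incident to D stay in D ∪ {v}
  have hedge : ∀ x w, G.Adj x w → w ∈ D → x = v ∨ x ∈ D := by
    intro x w hxw hwD
    by_cases hxv : x = v
    · exact Or.inl hxv
    right
    obtain ⟨a, ha, rfl⟩ := hwD
    refine ⟨⟨x, hxv⟩, ?_, rfl⟩
    have hadj : (G.induce ({v}ᶜ : Set V)).Adj a ⟨x, hxv⟩ := hxw.symm
    rw [SimpleGraph.ConnectedComponent.mem_supp_iff] at ha ⊢
    rw [← ha]
    exact (SimpleGraph.ConnectedComponent.sound hadj.reachable.symm)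
  -- each vertex of D has two distinct neighbors in D
  have htwo : ∀ u ∈ D, ∀ w : V, ∃ u', u' ∈ D ∧ G.Adj u u' ∧ u' ≠ w := by
    intro u hu w
    have hsub : G.neighborSet u \ {v} ⊆ D := by
      intro x hx
      rcases hedge x u hx.1.symm hu with h | h
      · exact absurd h hx.2
      · exact h
    have hcard : 1 < (G.neighborSet u \ {v}).ncard := by
      have h1 : (G.neighborSet u).ncard ≤ (G.neighborSet u \ {v}).ncard + 1 := by
        have hsub2 : G.neighborSet u ⊆ (G.neighborSet u \ {v}) ∪ {v} := by
          intro x hx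
          by_cases hxv : x = v
          · exact Or.inr (by simp [hxv])
          · exact Or.inl ⟨hx, by simp [hxv]⟩
        calc (G.neighborSet u).ncard
            ≤ ((G.neighborSet u \ {v}) ∪ {v}).ncard :=
              Set.ncard_le_ncard hsub2 (Set.toFinite _)
          _ ≤ (G.neighborSet u \ {v}).ncard + ({v} : Set V).ncard :=
              Set.ncard_union_le _ _
          _ = (G.neighborSet u \ {v}).ncard + 1 := by simp
      have := hδ u
      omega
    obtain ⟨x, y, hx, hy, hxy⟩ := (Set.one_lt_ncard_iff (Set.toFinite _)).1 hcard
    by_cases hxw : x = w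
    · exact ⟨y, hsub hy, hy.1, by rw [← hxw]; exact hxy.symm⟩
    · exact ⟨x, hsub hx, hx.1, hxw⟩
  set U : Set V := {u | G.Adj v u ∧ u ∈ D ∧ ∀ u', G.Adj v u' → u' ∈ D → u' = u} with hU
  have main : ∀ x, ZFDerived G ({v} ∪ (D ∪ {v})ᶜ) x → x ∈ Dᶜ ∪ U := by
    intro x hx
    induction hx with
    | @init y hy =>
      left
      rcases hy with hy | hy
      · rw [hy]; exact hvD
      · exact fun h => hy (Or.inl h)
    | @force y w hder hadj hall ih ihall =>
      by_cases hwD : w ∈ D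
      · rcases hedge y w hadj hwD with rfl | hyD
        · right
          refine ⟨hadj, hwD, ?_⟩
          intro u' h1 h2
          by_contra hne
          rcases ihall u' h1 hne with h | h
          · exact h h2
          · exact hne (h.2.2 w hadj hwD).symm
        · have hyU : y ∈ U := by
            rcases ih with h | h
            · exact absurd hyD h
            · exact h
          obtain ⟨u', hu'D, hu'adj, hu'w⟩ := htwo y hyD w
          rcases ihall u' hu'adj hu'w with h | h
          · exact absurd hu'D h
          · exact absurd (hyU.2.2 u' h.1 h.2.1) hu'adj.ne'
      · exact Or.inl hwD
  -- D is nonempty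
  obtain ⟨a, ha⟩ := K.exists_rep
  have haD : (a : V) ∈ D := ⟨a, by rw [SimpleGraph.ConnectedComponent.mem_supp_iff]; exact ha, rfl⟩
  by_cases hUe : U = ∅
  · refine ⟨a, haD, fun h => ?_⟩
    rcases main a h with hc | hc
    · exact hc haD
    · rw [hUe] at hc; exact hc
  · obtain ⟨u₀, hu₀⟩ := Set.nonempty_iff_ne_empty.2 hUe
    obtain ⟨u', hu'D, hu'adj, hu'ne⟩ := htwo u₀ hu₀.2.1 u₀
    refine ⟨u', hu'D, fun h => ?_⟩
    rcases main u' h with hc | hc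
    · exact hc hu'D
    · exact hu'ne (hu₀.2.2 u' hc.1 hc.2.1)
end

section
/- If a graph G on n vertices admits a spanning subgraph H that is bipartite with minimum degree at least 2, then F(G) ≥ ⌈n/2⌉. -/
open SimpleGraph

variable {V : Type*}

lemma derived_stalled {V : Type*} (G : SimpleGraph V) (S : Set V)
    (h : ∀ v ∈ S, ∃ u1 u2, u1 ≠ u2 ∧ G.Adj v u1 ∧ G.Adj v u2 ∧ u1 ∉ S ∧ u2 ∉ S) :
    ∀ v, ZFDerived G S v → v ∈ S := by
  intro v hv
  induction hv with
  | init h' => exact h'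
  | @force v w _ hadj _ ih ihall =>
    obtain ⟨u1, u2, hne, h1, h2, hn1, hn2⟩ := h v ih
    by_cases hw : u1 = w
    · have hu2w : u2 ≠ w := fun h' => hne (hw.trans h'.symm)
      exact absurd (ihall u2 h2 hu2w) hn2
    · exact absurd (ihall u1 h1 hw) hn1

theorem failedZF_ge_of_bipartite_spanning_subgraph {V : Type*} [Fintype V]
    (G : SimpleGraph V)
    (hH : ∃ H : SimpleGraph V, H ≤ G ∧ H.Colorable 2 ∧ ∀ v, 2 ≤ (H.neighborSet v).ncard) :
    (Fintype.card V + 1) / 2 ≤ failedZF G := by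
  classical
  by_cases hn : Fintype.card V = 0
  · omega
  obtain ⟨H, hle, hcol, hdeg⟩ := hH
  obtain ⟨c⟩ := hcol
  -- every vertex in a color class has ≥ 2 G-neighbors outside the class
  have key : ∀ i : Fin 2, ∀ v, c v = i → ∃ u1 u2, u1 ≠ u2 ∧ G.Adj v u1 ∧ G.Adj v u2 ∧
      c u1 ≠ i ∧ c u2 ≠ i := by
    intro i v hv
    have h2 : 1 < (H.neighborSet v).ncard := hdeg v
    rw [Set.one_lt_ncard (Set.toFinite _)] at h2
    obtain ⟨a, ha, b, hb, hab⟩ := h2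
    exact ⟨a, b, hab, hle ha, hle hb,
      fun h => (c.valid ha) (hv.trans h.symm), fun h => (c.valid hb) (hv.trans h.symm)⟩
  -- each color class is a failed zero forcing set (given the other class is nonempty)
  have failedClass : ∀ i : Fin 2, (∃ w, c w ≠ i) →
      IsFailed G ((Finset.univ.filter (fun v => c v = i) : Finset V) : Set V) := by
    intro i hw
    obtain ⟨w, hw⟩ := hw
    set S : Set V := ((Finset.univ.filter (fun v => c v = i) : Finset V) : Set V) with hS
    have hsub : ∀ v, ZFDerived G S v → v ∈ S :=
      derived_stalled G S (by
        intro v hv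
        have hv' : c v = i := by simpa [hS] using hv
        obtain ⟨u1, u2, hne, h1, h2, hn1, hn2⟩ := key i v hv'
        exact ⟨u1, u2, hne, h1, h2, by simpa [hS] using hn1, by simpa [hS] using hn2⟩)
    intro hU
    have hwmem : w ∈ ZFDerivedSet G S := hU ▸ Set.mem_univ w
    exact hw (by simpa [hS] using hsub w hwmem)
  -- both classes' complements are nonempty
  have hne : Nonempty V := Fintype.card_pos_iff.mp (Nat.pos_of_ne_zero hn)
  obtain ⟨w⟩ := hne
  have hnb : (H.neighborSet w).Nonempty := by
    apply Set.nonempty_of_ncard_ne_zero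
    have := hdeg w; omega
  obtain ⟨u, hu⟩ := hnb
  have hcu : c w ≠ c u := c.valid hu
  have hexists : ∀ i : Fin 2, ∃ x, c x ≠ i := by
    intro i
    by_cases h : c w = i
    · exact ⟨u, fun h' => hcu (h.trans h'.symm)⟩
    · exact ⟨w, h⟩
  set K := {k | ∃ S : Finset V, IsFailed G ↑S ∧ S.card = k} with hK
  have bdd : BddAbove K := by
    refine ⟨Fintype.card V, ?_⟩
    rintro k ⟨S, _, rfl⟩
    simpa using Finset.card_le_card (Finset.subset_univ S)
  have hA : (Finset.univ.filter (fun v => c v = (0 : Fin 2))).card ∈ K :=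
    ⟨_, failedClass 0 (hexists 0), rfl⟩
  have hB : (Finset.univ.filter (fun v => c v = (1 : Fin 2))).card ∈ K :=
    ⟨_, failedClass 1 (hexists 1), rfl⟩
  have hAB : (Finset.univ.filter (fun v => c v = (0 : Fin 2))).card +
      (Finset.univ.filter (fun v => c v = (1 : Fin 2))).card = Fintype.card V := by
    have hfilter : Finset.univ.filter (fun v => c v = (1 : Fin 2)) =
        Finset.univ.filter (fun v => ¬ c v = (0 : Fin 2)) := by
      apply Finset.filter_congr
      intro x _
      constructor
      · intro h h0; rw [h0] at h; exact absurd h (by decide)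
      · intro h; omega
    rw [hfilter, Finset.card_filter_add_card_filter_not, Finset.card_univ]
  have h1 := le_csSup bdd hA
  have h2 := le_csSup bdd hB
  have hfe : failedZF G = sSup K := rfl
  rw [hfe]
  omega
end

section
/- Every path Pₙ on n vertices satisfies F(Pₙ) = ⌊(n−1)/2⌋. -/
open SimpleGraph

variable {V : Type*}

/-!
The derived set of `S` is the least set containing `S` that is closed under forcing. On a path,
a force-closed set containing two adjacent vertices, or an endpoint (which forces its only
neighbour), is everything. So a failed set consists of interior vertices, no two adjacent,
which bounds its size by `⌊(n - 1)/2⌋`; the odd interior vertices attain the bound, since each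
of them has two unfilled neighbours.
-/

def IsForceClosed (G : SimpleGraph V) (T : Set V) : Prop :=
  ∀ ⦃v w⦄, v ∈ T → G.Adj v w → (∀ u, G.Adj v u → u ≠ w → u ∈ T) → w ∈ T

section ForceClosed

variable {G : SimpleGraph V} {S T : Set V}

lemma subset_zfDerivedSet : S ⊆ ZFDerivedSet G S := fun _ => ZFDerived.init

lemma isForceClosed_zfDerivedSet : IsForceClosed G (ZFDerivedSet G S) :=
  fun _ _ hv hvw hothers => ZFDerived.force hv hvw hothers

lemma zfDerivedSet_subset (hT : IsForceClosed G T) (hST : S ⊆ T) : ZFDerivedSet G S ⊆ T := by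
  intro x hx
  induction hx with
  | init hv => exact hST hv
  | force _ hvw _ ihv ihothers => exact hT ihv hvw ihothers

lemma IsFailed.of_subset_isForceClosed (hT : IsForceClosed G T) (hST : S ⊆ T)
    (hT_ne : T ≠ Set.univ) : IsFailed G S :=
  fun h => hT_ne (Set.eq_univ_of_univ_subset (h ▸ zfDerivedSet_subset hT hST))

lemma IsForceClosed.mem_of_adj_of_forall_adj_eq (hT : IsForceClosed G T) {v w : V} (hv : v ∈ T)
    (hvw : G.Adj v w) (hleaf : ∀ u, G.Adj v u → u = w) : w ∈ T :=
  hT hv hvw fun u hu hne => absurd (hleaf u hu) hne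

end ForceClosed

lemma two_le_of_mem_of_ne_univ {n : ℕ} {T : Set (Fin n)} {v : Fin n} (hv : v ∈ T)
    (hT_ne : T ≠ Set.univ) : 2 ≤ n := by
  by_contra! hn
  refine hT_ne (Set.eq_univ_of_forall fun w => ?_)
  obtain rfl : w = v := Fin.ext (by omega)
  exact hv

namespace IsForceClosed

variable {n : ℕ} {T : Set (Fin n)}

lemma pathGraph_mem_of_succ_succ (hT : IsForceClosed (pathGraph n) T) {i j k : Fin n}
    (hij : i.val + 1 = j.val) (hjk : j.val + 1 = k.val) (hi : i ∈ T) (hj : j ∈ T) : k ∈ T :=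
  hT hj (pathGraph_adj.2 (Or.inl hjk)) fun u hu hne => by
    obtain rfl : u = i := by
      rw [pathGraph_adj] at hu
      exact Fin.ext (by have := Fin.val_ne_of_ne hne; omega)
    exact hi

lemma pathGraph_mem_of_pred_pred (hT : IsForceClosed (pathGraph n) T) {i j k : Fin n}
    (hij : i.val + 1 = j.val) (hjk : j.val + 1 = k.val) (hk : k ∈ T) (hj : j ∈ T) : i ∈ T :=
  hT hj (pathGraph_adj.2 (Or.inr hij)) fun u hu hne => by
    obtain rfl : u = k := by
      rw [pathGraph_adj] at hu
      exact Fin.ext (by have := Fin.val_ne_of_ne hne; omega)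
    exact hk

lemma pathGraph_mem_of_val_eq_add (hT : IsForceClosed (pathGraph n) T) {i j : Fin n}
    (hij : i.val + 1 = j.val) (hi : i ∈ T) (hj : j ∈ T) :
    ∀ (d : ℕ) (k : Fin n), k.val = j.val + d → k ∈ T := by
  intro d
  induction d generalizing i j with
  | zero => exact fun k hk => (Fin.ext hk : k = j) ▸ hj
  | succ d ih =>
    intro k hk
    let j' : Fin n := ⟨j.val + 1, by omega⟩
    exact ih (i := j) (j := j') rfl hj (hT.pathGraph_mem_of_succ_succ hij rfl hi hj) k
      (by simp only [j']; omega)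

lemma pathGraph_mem_of_val_add_eq (hT : IsForceClosed (pathGraph n) T) {i j : Fin n}
    (hij : i.val + 1 = j.val) (hi : i ∈ T) (hj : j ∈ T) :
    ∀ (d : ℕ) (k : Fin n), k.val + d = i.val → k ∈ T := by
  intro d
  induction d generalizing i j with
  | zero => exact fun k hk => (Fin.ext hk : k = i) ▸ hi
  | succ d ih =>
    intro k hk
    let i' : Fin n := ⟨i.val - 1, by omega⟩
    have hi'i : i'.val + 1 = i.val := by simp only [i']; omega
    exact ih hi'i (hT.pathGraph_mem_of_pred_pred hi'i hij hj hi) hi k (by simp only [i']; omega)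

lemma pathGraph_eq_univ_of_adj_mem (hT : IsForceClosed (pathGraph n) T) {i j : Fin n}
    (hij : i.val + 1 = j.val) (hi : i ∈ T) (hj : j ∈ T) : T = Set.univ := by
  refine Set.eq_univ_of_forall fun k => ?_
  rcases le_or_gt j.val k.val with hjk | hkj
  · exact hT.pathGraph_mem_of_val_eq_add hij hi hj (k.val - j.val) k (by omega)
  · exact hT.pathGraph_mem_of_val_add_eq hij hi hj (i.val - k.val) k (by omega)

variable (hT : IsForceClosed (pathGraph n) T) (hT_ne : T ≠ Set.univ)
include hT hT_ne

lemma pathGraph_succ_not_mem {i j : Fin n} (hij : i.val + 1 = j.val) (hi : i ∈ T) : j ∉ T :=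
  fun hj => hT_ne (hT.pathGraph_eq_univ_of_adj_mem hij hi hj)

lemma pathGraph_pos_of_mem {v : Fin n} (hv : v ∈ T) : 0 < v.val := by
  have hn := two_le_of_mem_of_ne_univ hv hT_ne
  by_contra! hv0
  let w : Fin n := ⟨1, hn⟩
  have hvw : v.val + 1 = w.val := by simp only [w]; omega
  refine hT.pathGraph_succ_not_mem hT_ne hvw hv (hT.mem_of_adj_of_forall_adj_eq hv
    (pathGraph_adj.2 (Or.inl hvw)) fun u hu => Fin.ext ?_)
  rw [pathGraph_adj] at hu
  simp only [w]; omega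

lemma pathGraph_succ_lt_of_mem {v : Fin n} (hv : v ∈ T) : v.val + 1 < n := by
  have hn := two_le_of_mem_of_ne_univ hv hT_ne
  by_contra! hvn
  let w : Fin n := ⟨n - 2, by omega⟩
  have hwv : w.val + 1 = v.val := by simp only [w]; omega
  refine hT.pathGraph_succ_not_mem hT_ne hwv (hT.mem_of_adj_of_forall_adj_eq hv
    (pathGraph_adj.2 (Or.inr hwv)) fun u hu => Fin.ext ?_) hv
  rw [pathGraph_adj] at hu
  have := u.isLt
  simp only [w]; omega

end IsForceClosed

-- `i ↦ (i - 1) / 2` is injective on `S`: two points with the same image would be adjacent.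
lemma card_le_of_interior_of_no_adj {n : ℕ} (S : Finset (Fin n))
    (hpos : ∀ i ∈ S, 0 < i.val) (hlt : ∀ i ∈ S, i.val + 1 < n)
    (hsep : ∀ i ∈ S, ∀ j ∈ S, i.val + 1 ≠ j.val) : S.card ≤ (n - 1) / 2 := by
  simpa using Finset.card_le_card_of_injOn (fun i : Fin n => (i.val - 1) / 2)
    (t := Finset.range ((n - 1) / 2))
    (fun i hi => by
      have := hpos i hi; have := hlt i hi
      simp only [Finset.coe_range, Set.mem_Iio]; omega)
    (fun i hi j hj hij => Fin.ext (by
      have := hpos i hi; have := hpos j hj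
      have := hsep i hi j hj; have := hsep j hj i hi
      simp only at hij; omega))

lemma card_le_of_isFailed_pathGraph {n : ℕ} {S : Finset (Fin n)}
    (hS : IsFailed (pathGraph n) ↑S) : S.card ≤ (n - 1) / 2 := by
  have hD := isForceClosed_zfDerivedSet (G := pathGraph n) (S := ↑S)
  have hSD : ∀ i ∈ S, i ∈ ZFDerivedSet (pathGraph n) ↑S := fun _ hi => subset_zfDerivedSet hi
  exact card_le_of_interior_of_no_adj S
    (fun i hi => hD.pathGraph_pos_of_mem hS (hSD i hi))
    (fun i hi => hD.pathGraph_succ_lt_of_mem hS (hSD i hi))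
    (fun i hi j hj hij => hD.pathGraph_succ_not_mem hS hij (hSD i hi) (hSD j hj))

def oddInterior (n : ℕ) : Finset (Fin n) :=
  Finset.univ.filter fun v => v.val % 2 = 1 ∧ v.val + 1 < n

lemma mem_oddInterior {n : ℕ} {v : Fin n} :
    v ∈ oddInterior n ↔ v.val % 2 = 1 ∧ v.val + 1 < n := by
  simp [oddInterior]

lemma card_oddInterior (n : ℕ) : (oddInterior n).card = (n - 1) / 2 := by
  rw [← Finset.card_range ((n - 1) / 2), eq_comm]
  refine Finset.card_bij (fun k hk => ⟨2 * k + 1, by rw [Finset.mem_range] at hk; omega⟩)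
    ?_ ?_ ?_
  · intro k hk
    simp only [Finset.mem_range] at hk
    simp only [mem_oddInterior]
    omega
  · intro k _ l _ hkl
    simp only [Fin.mk.injEq] at hkl
    omega
  · intro v hv
    rw [mem_oddInterior] at hv
    exact ⟨v.val / 2, by rw [Finset.mem_range]; omega, Fin.ext (by simp only; omega)⟩

lemma isForceClosed_oddInterior (n : ℕ) : IsForceClosed (pathGraph n) ↑(oddInterior n) := by
  intro v w hv hvw hothers
  rw [Finset.mem_coe, mem_oddInterior] at hv
  have hnbr : ∀ u, (pathGraph n).Adj v u → u ∉ oddInterior n := by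
    intro u hu
    rw [pathGraph_adj] at hu
    rw [mem_oddInterior]
    omega
  exfalso
  rw [pathGraph_adj] at hvw
  rcases hvw with hvw | hwv
  · have hu : (pathGraph n).Adj v ⟨v.val - 1, by omega⟩ :=
      pathGraph_adj.2 (.inr (by simp only; omega))
    exact hnbr _ hu (hothers _ hu (Fin.ne_of_val_ne (by simp only; omega)))
  · have hu : (pathGraph n).Adj v ⟨v.val + 1, hv.2⟩ := pathGraph_adj.2 (.inl rfl)
    exact hnbr _ hu (hothers _ hu (Fin.ne_of_val_ne (by simp only; omega)))

lemma isFailed_oddInterior {n : ℕ} (hn : 0 < n) : IsFailed (pathGraph n) ↑(oddInterior n) :=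
  .of_subset_isForceClosed (isForceClosed_oddInterior n) subset_rfl fun h => by
    have := (Set.eq_univ_iff_forall.1 h) ⟨0, hn⟩
    rw [Finset.mem_coe, mem_oddInterior] at this
    simp at this

theorem failedZF_pathGraph (n : ℕ) :
    failedZF (pathGraph n) = (n - 1) / 2 := by
  rcases n.eq_zero_or_pos with rfl | hn
  · have hnone : {k | ∃ S : Finset (Fin 0), IsFailed (pathGraph 0) ↑S ∧ S.card = k} = ∅ :=
      Set.eq_empty_of_forall_notMem fun _ ⟨_, hS, _⟩ => hS (Subsingleton.elim _ _)
    simp only [failedZF, hnone, csSup_empty]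
    rfl
  · refine IsGreatest.csSup_eq
      ⟨⟨oddInterior n, isFailed_oddInterior hn, card_oddInterior n⟩, ?_⟩
    rintro _ ⟨S, hS, rfl⟩
    exact card_le_of_isFailed_pathGraph hS
end

section
/- Let G be a graph with a vertex v of degree 1 adjacent to w, and let S' be a stalled set in G' = G − {v, w} such that every vertex of S' is either spent (all neighbors in G' are in S') or has at least two neighbors in G' outside S'. If w has a neighbor in G' not belonging to S', then S' ∪ {w} is stalled in G. -/
open SimpleGraph

variable {V : Type*}

theorem stalled_extension_deg_one {V : Type*} [Fintype V] [DecidableEq V]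
    (G : SimpleGraph V) (v w : V) (hdeg : G.neighborSet v = {w}) (hvw : G.Adj v w)
    (S' : Set ↥({v, w}ᶜ : Set V))
    (hstalled : ZFDerivedSet (G.induce ({v, w}ᶜ : Set V)) S' = S')
    (hcond : ∀ x ∈ S', (∀ y, (G.induce ({v, w}ᶜ : Set V)).Adj x y → y ∈ S') ∨
      2 ≤ ((G.induce ({v, w}ᶜ : Set V)).neighborSet x \ S').ncard)
    (hw : ∃ z : ↥({v, w}ᶜ : Set V), G.Adj w ↑z ∧ z ∉ S') :
    ZFDerivedSet G (Subtype.val '' S' ∪ {w}) = Subtype.val '' S' ∪ {w} := by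
  apply Set.Subset.antisymm
  · intro x hx
    induction hx with
    | init h => exact h
    | @force a y ha hadj hall iha ihall =>
      rcases iha with ⟨a', ha'S, rfl⟩ | haw
      · -- a = ↑a', a' ∈ S'
        have hav : ¬ G.Adj (↑a' : V) v := by
          intro h
          have hmem : (a' : V) ∈ G.neighborSet v := h.symm
          rw [hdeg] at hmem
          exact a'.2 (by simp [Set.mem_singleton_iff.mp hmem])
        rcases hcond a' ha'S with hspent | htwo
        · by_cases hyw : y = w
          · right; simp [hyw]
          · have hyv : y ≠ v := fun h => hav (h ▸ hadj)
            have hy : y ∈ ({v, w}ᶜ : Set V) := by simp [hyv, hyw]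
            have : (⟨y, hy⟩ : ↥({v, w}ᶜ : Set V)) ∈ S' :=
              hspent _ (by simpa using hadj)
            exact Or.inl ⟨_, this, rfl⟩
        · have hfin : ((G.induce ({v, w}ᶜ : Set V)).neighborSet a' \ S').Finite :=
            Set.toFinite _
          obtain ⟨p, q, hp, hq, hpq⟩ :=
            (Set.one_lt_ncard_iff hfin).mp (by omega)
          have key : ∀ c, c ∈ (G.induce ({v, w}ᶜ : Set V)).neighborSet a' \ S' →
              (c : V) ≠ y → False := by
            intro c hc hne
            have hadjc : G.Adj (↑a' : V) ↑c := by
              have := hc.1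
              simpa using this
            rcases ihall _ hadjc hne with ⟨c', hc', hcc⟩ | hcw
            · exact hc.2 (by rwa [show c' = c from Subtype.ext hcc] at hc')
            · exact c.2 (by simp [Set.mem_singleton_iff.mp hcw])
          by_cases h : (p : V) = y
          · exact (key q hq (fun hh => hpq (Subtype.ext (by rw [h, hh])))).elim
          · exact (key p hp h).elim
      · -- a = w
        have haw' : a = w := Set.mem_singleton_iff.mp haw
        subst haw'
        by_cases hyv : y = v
        · obtain ⟨z, hz, hzS⟩ := hw
          have hzy : (z : V) ≠ y := by
            intro h; exact z.2 (by simp [h, hyv])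
          rcases ihall _ hz hzy with ⟨z', hz', hzz⟩ | hzw
          · exact absurd (by rwa [show z' = z from Subtype.ext hzz] at hz') hzS
          · exact (z.2 (by simp [Set.mem_singleton_iff.mp hzw])).elim
        · have hvy : v ≠ y := fun h => hyv h.symm
          rcases ihall v hvw.symm hvy with ⟨v', _, hvv⟩ | hvw'
          · exact (v'.2 (by simp [hvv])).elim
          · exact (G.ne_of_adj hvw (Set.mem_singleton_iff.mp hvw')).elim
  · intro x hx
    exact ZFDerived.init hx
end

section
/- Let G be a graph with a vertex v of degree 1 adjacent to w, and let S' be a stalled set in G' = G − {v, w} with S' ≠ V(G'). If all neighbors of w in G' belong to S', then S' ∪ {v, w} is a stalled set in G which is a proper subset of V(G), hence a failed zero forcing set. -/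
open SimpleGraph

variable {V : Type*}

theorem stalled_extension_deg_one_spent {V : Type*} [Fintype V] [DecidableEq V]
    (G : SimpleGraph V) (v w : V) (hdeg : G.neighborSet v = {w}) (hvw : G.Adj v w)
    (S' : Set ↥({v, w}ᶜ : Set V))
    (hstalled : ZFDerivedSet (G.induce ({v, w}ᶜ : Set V)) S' = S')
    (hne : S' ≠ Set.univ)
    (hw : ∀ z : ↥({v, w}ᶜ : Set V), G.Adj w ↑z → z ∈ S') :
    ZFDerivedSet G (Subtype.val '' S' ∪ {v, w}) = Subtype.val '' S' ∪ {v, w} ∧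
      (Subtype.val '' S' ∪ {v, w} : Set V) ≠ Set.univ := by
  have hadjv : ∀ u, G.Adj v u → u = w := by
    intro u hu
    have : u ∈ G.neighborSet v := hu
    rw [hdeg] at this; exact this
  have key : ∀ x, ZFDerived G (Subtype.val '' S' ∪ {v, w}) x →
      x ∈ Subtype.val '' S' ∪ {v, w} := by
    intro x hx
    induction hx with
    | init h => exact h
    | @force a b ha hab hall iha ihall =>
      by_cases hbv : b = v
      · subst hbv
        exact Or.inr (Or.inl rfl)
      by_cases hbw : b = w
      · exact Or.inr (Or.inr hbw)
      have hbC : b ∈ ({v, w}ᶜ : Set V) := by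
        simp only [Set.mem_compl_iff, Set.mem_insert_iff, Set.mem_singleton_iff]
        tauto
      rcases iha with ⟨a', ha', rfl⟩ | hav
      · have hder : ZFDerived (G.induce ({v,w}ᶜ : Set V)) S' ⟨b, hbC⟩ := by
          refine ZFDerived.force (ZFDerived.init ha') hab ?_
          intro u hu hune
          have hub : (u : V) ≠ b := fun h => hune (Subtype.ext h)
          have := ihall u hu hub
          rcases this with ⟨u', hu', huu⟩ | huu
          · have : u' = u := Subtype.ext huu
            exact ZFDerived.init (this ▸ hu')
          · exact absurd huu u.2
        have hbS' : (⟨b, hbC⟩ : ↥({v,w}ᶜ : Set V)) ∈ S' := by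
          rw [← hstalled]; exact hder
        exact Or.inl ⟨_, hbS', rfl⟩
      · rcases hav with rfl | rfl
        · exact absurd (hadjv b hab) hbw
        · exact Or.inl ⟨⟨b, hbC⟩, hw _ hab, rfl⟩
  constructor
  · apply Set.eq_of_subset_of_subset
    · intro x hx; exact key x hx
    · intro x hx; exact ZFDerived.init hx
  · intro h
    obtain ⟨z, hz⟩ : ∃ z : ↥({v,w}ᶜ : Set V), z ∉ S' := by
      by_contra h'; push_neg at h'; exact hne (Set.eq_univ_of_forall h')
    have hmem : (z : V) ∈ Subtype.val '' S' ∪ {v, w} := h ▸ Set.mem_univ _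
    rcases hmem with ⟨z', hz', hzz⟩ | hzz
    · exact hz (Subtype.ext hzz ▸ hz')
    · exact z.2 hzz
end

section
/- For every graph G on n vertices, if G has a vertex of degree 1, then F(G) ≥ F(G − {v, w}) + 1, where v is a degree-1 vertex and w its unique neighbor. -/
open SimpleGraph

variable {V : Type*}

lemma zf_empty_not {V : Type*} (G : SimpleGraph V) (x : V)
    (h : ZFDerived G (∅ : Set V) x) : False := by
  induction h with
  | init h => exact h
  | force _ _ _ ih _ => exact ih

/-- Key lemma: derivations in `G` from `S ∪ {w}` restrict to derivations in the
induced graph on `{v,w}ᶜ` from `S`, when `v` is a degree-one vertex with neighbor `w`. -/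
lemma zf_key {V : Type*} [DecidableEq V] (G : SimpleGraph V) (v w : V)
    (hdeg : G.neighborSet v = {w})
    (S : Finset (({v, w}ᶜ : Set V) : Set V)) (x : V)
    (hx : ZFDerived G (↑(S.image Subtype.val ∪ {w}) : Set V) x) :
    (x = v → ∀ u (hu : u ∈ ({v, w}ᶜ : Set V)), G.Adj w u →
        ZFDerived (G.induce ({v, w}ᶜ : Set V)) ↑S ⟨u, hu⟩) ∧
    (∀ hx' : x ∈ ({v, w}ᶜ : Set V),
        ZFDerived (G.induce ({v, w}ᶜ : Set V)) ↑S ⟨x, hx'⟩) := by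
  have hadj_vw : G.Adj v w := by
    have : w ∈ G.neighborSet v := by rw [hdeg]; rfl
    exact this
  have hvw : v ≠ w := G.ne_of_adj hadj_vw
  have hnbr : ∀ u, G.Adj v u → u = w := by
    intro u hu
    have : u ∈ G.neighborSet v := hu
    rwa [hdeg] at this
  induction hx with
  | @init x h =>
    have h' : x ∈ S.image Subtype.val ∪ {w} := by exact_mod_cast h
    rcases Finset.mem_union.mp h' with h1 | h2
    · obtain ⟨a, ha, rfl⟩ := Finset.mem_image.mp h1
      constructor
      · intro heq
        exfalso
        have := a.2
        simp only [Set.mem_compl_iff, Set.mem_insert_iff, Set.mem_singleton_iff] at this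
        exact this (Or.inl heq)
      · intro hx'
        have : (⟨(a : V), hx'⟩ : ({v, w}ᶜ : Set V)) = a := Subtype.ext rfl
        rw [this]
        exact ZFDerived.init (by exact_mod_cast ha)
    · have hxw : x = w := Finset.mem_singleton.mp h2
      constructor
      · intro heq; exact absurd (heq.symm.trans hxw) hvw
      · intro hx'
        exact absurd (by rw [hxw]; simp : x ∈ ({v, w} : Set V)) hx'
  | @force y x hy hadj hall ihy ihall =>
    by_cases hyv : y = v
    · have hxw : x = w := hnbr x (hyv ▸ hadj)
      constructor
      · intro heq; exact absurd (heq.symm.trans hxw) hvw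
      · intro hx'
        exact absurd (by rw [hxw]; simp : x ∈ ({v, w} : Set V)) hx'
    · by_cases hyw : y = w
      · subst hyw
        constructor
        · -- x = v : all other neighbors of w in the complement are derived
          intro heq
          intro u hu hadju
          have hu_ne : u ≠ x := by
            rw [heq]
            simp only [Set.mem_compl_iff, Set.mem_insert_iff, Set.mem_singleton_iff] at hu
            exact fun h => hu (Or.inl h)
          exact (ihall u hadju hu_ne).2 hu
        · -- x in complement : w forces x, so v must be derived, which gives us x
          intro hx'
          have hxv : x ≠ v := by
            simp only [Set.mem_compl_iff, Set.mem_insert_iff, Set.mem_singleton_iff] at hx'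
            exact fun h => hx' (Or.inl h)
          have hv := ihall v hadj_vw.symm (fun h => hxv h.symm)
          exact hv.1 rfl x hx' hadj
      · -- y is in the complement
        have hy' : y ∈ ({v, w}ᶜ : Set V) := by
          simp only [Set.mem_compl_iff, Set.mem_insert_iff, Set.mem_singleton_iff]
          rintro (h | h)
          · exact hyv h
          · exact hyw h
        constructor
        · intro heq
          subst heq
          exfalso
          exact hyw (hnbr y hadj.symm)
        · intro hx'
          have hyder := ihy.2 hy'
          refine ZFDerived.force hyder ?_ ?_
          · exact hadj
          · rintro ⟨u, hu⟩ hadju hune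
            have hune' : u ≠ x := fun h => hune (Subtype.ext h)
            have : G.Adj y u := hadju
            exact (ihall u this hune').2 hu

theorem failedZF_ge_deleted {V : Type*} [Fintype V] [DecidableEq V]
    (G : SimpleGraph V) (v w : V) (hdeg : G.neighborSet v = {w})
    (hnonempty : ∃ u : V, u ≠ v ∧ u ≠ w) :
    failedZF (G.induce ({v, w}ᶜ : Set V)) + 1 ≤ failedZF G := by
  classical
  obtain ⟨u₀, hu₀v, hu₀w⟩ := hnonempty
  have hu₀ : u₀ ∈ ({v, w}ᶜ : Set V) := by
    simp only [Set.mem_compl_iff, Set.mem_insert_iff, Set.mem_singleton_iff]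
    rintro (h | h)
    · exact hu₀v h
    · exact hu₀w h
  set G' := G.induce ({v, w}ᶜ : Set V) with hG'
  set T : Set ℕ := {k | ∃ S : Finset (({v, w}ᶜ : Set V) : Set V),
      IsFailed G' ↑S ∧ S.card = k} with hT
  -- T is nonempty: the empty set is failed
  have hTne : T.Nonempty := by
    refine ⟨0, ∅, ?_, Finset.card_empty⟩
    intro h
    have : (⟨u₀, hu₀⟩ : ({v, w}ᶜ : Set V)) ∈
        ZFDerivedSet G' ((∅ : Finset (({v, w}ᶜ : Set V) : Set V)) : Set _) := by
      rw [h]; trivial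
    simp only [Finset.coe_empty] at this
    exact zf_empty_not G' _ this
  -- T is bounded above
  have hTbdd : BddAbove T := by
    refine ⟨Fintype.card V, ?_⟩
    rintro k ⟨S, _, rfl⟩
    calc S.card = (S.image Subtype.val).card :=
          (Finset.card_image_of_injective S Subtype.val_injective).symm
      _ ≤ Fintype.card V := Finset.card_le_univ _
  -- the sup of T is attained
  have hmem : failedZF G' ∈ T := by
    have := Nat.sSup_mem hTne hTbdd
    exact this
  obtain ⟨S, hSfail, hScard⟩ := hmem
  -- build the failed set in G
  set S' : Finset V := S.image Subtype.val ∪ {w} with hS'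
  have hwnot : w ∉ S.image Subtype.val := by
    intro h
    obtain ⟨a, _, ha⟩ := Finset.mem_image.mp h
    have := a.2
    simp only [Set.mem_compl_iff, Set.mem_insert_iff, Set.mem_singleton_iff] at this
    exact this (Or.inr ha)
  have hS'card : S'.card = S.card + 1 := by
    rw [hS', Finset.union_comm, ← Finset.insert_eq, Finset.card_insert_of_notMem hwnot,
      Finset.card_image_of_injective S Subtype.val_injective]
  -- S' is failed in G
  have hS'fail : IsFailed G ↑S' := by
    have : ∃ u' : ({v, w}ᶜ : Set V), ¬ ZFDerived G' ↑S u' := by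
      by_contra h
      push_neg at h
      exact hSfail (Set.eq_univ_iff_forall.mpr fun u' => h u')
    obtain ⟨⟨u, hu⟩, hu_not⟩ := this
    intro h
    have hder : ZFDerived G (↑S' : Set V) u := by
      have : u ∈ ZFDerivedSet G ↑S' := by rw [h]; trivial
      exact this
    exact hu_not ((zf_key G v w hdeg S u hder).2 hu)
  -- conclude
  have hbdd : BddAbove {k | ∃ S : Finset V, IsFailed G ↑S ∧ S.card = k} := by
    refine ⟨Fintype.card V, ?_⟩
    rintro k ⟨S, _, rfl⟩
    exact Finset.card_le_univ _
  have : S.card + 1 ≤ failedZF G := by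
    apply le_csSup hbdd
    exact ⟨S', hS'fail, hS'card⟩
  rwa [hScard] at this
end

section
/- Let G be a graph with δ(G) ≥ 3 and suppose every cycle of G has odd length. Then any two distinct cycles of G are vertex-disjoint or the graph contains an even cycle; in particular, if C is an odd cycle and P, Q are paths leaving C from distinct vertices c₀ ≠ cᵢ of C with P ∩ C = {c₀}, Q ∩ C = {cᵢ}, and P ∩ Q ≠ ∅, then G contains an even cycle. -/
open SimpleGraph

variable {V : Type*}

/-!
Following `P` to a common vertex and then `Q` back gives a walk from `c₀` to `cᵢ` meeting `C` only
at its ends; removing its loops leaves a path `R`, which is not the edge `c₀cᵢ` because neither `P`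
nor `Q` contains both ends. The two arcs of `C` between `c₀` and `cᵢ` close `R` into two cycles
whose lengths add up to `2 |R| + |C|`, an odd number, so one of them is even.
-/

namespace SimpleGraph.Walk

variable {G : SimpleGraph V} {u v : V}

lemma IsPath.start_notMem_tail_support {p : G.Walk u v} (hp : p.IsPath) :
    u ∉ p.support.tail := by
  have hnodup := hp.support_nodup
  rw [← p.cons_tail_support, List.nodup_cons] at hnodup
  exact hnodup.1

lemma one_lt_length_of_notMem_edges {p : G.Walk u v} (huv : u ≠ v) (he : s(u, v) ∉ p.edges) :
    1 < p.length := by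
  match p with
  | nil => exact absurd rfl huv
  | cons _ nil => simp at he
  | cons _ (cons _ _) => simp

lemma IsPath.isCycle_append_of_support_inter {p : G.Walk u v} {q : G.Walk v u}
    (hp : p.IsPath) (hq : q.IsPath) (hlen : 1 < p.length)
    (hpq : ∀ z ∈ p.support, z ∈ q.support → z = u ∨ z = v) : (p.append q).IsCycle := by
  refine hp.isCycle_append hq (fun z hzp hzq => ?_) (Or.inl hlen)
  rcases hpq z (List.mem_of_mem_tail hzp) (List.mem_of_mem_tail hzq) with rfl | rfl
  · exact hp.start_notMem_tail_support hzp
  · exact hq.start_notMem_tail_support hzq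

lemma IsCycle.isPath_dropUntil [DecidableEq V] {c : G.Walk u u} (hc : c.IsCycle)
    (hv : v ∈ c.support) (huv : u ≠ v) : (c.dropUntil v hv).IsPath := by
  rw [← c.take_spec hv] at hc
  exact hc.isPath_of_append_right (not_nil_of_ne huv)

theorem IsCycle.exists_isCycle_even_of_isPath {C : G.Walk u u} (hC : C.IsCycle)
    (hodd : Odd C.length) (hv : v ∈ C.support) {R : G.Walk u v} (hR : R.IsPath)
    (hlen : 1 < R.length) (hRC : ∀ z ∈ R.support, z ∈ C.support → z = u ∨ z = v) :
    ∃ (w : V) (c : G.Walk w w), c.IsCycle ∧ Even c.length := by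
  classical
  have huv : u ≠ v := by
    rintro rfl
    have := (isPath_iff_nil.mp hR).length_eq_zero
    omega
  set A := C.takeUntil v hv
  set B := C.dropUntil v hv
  have hRB : (R.append B).IsCycle :=
    hR.isCycle_append_of_support_inter (hC.isPath_dropUntil hv huv) hlen
      fun z hz hzB => hRC z hz (C.support_dropUntil_subset_support hv hzB)
  have hRA : (R.append A.reverse).IsCycle :=
    hR.isCycle_append_of_support_inter (hC.isPath_takeUntil hv).reverse hlen
      fun z hz hzA => hRC z hz (C.support_takeUntil_subset_support hv (by simpa using hzA))
  have hsum : (R.append B).length + (R.append A.reverse).length = 2 * R.length + C.length := by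
    rw [← C.take_spec hv, length_append, length_append, length_append, length_reverse]
    ring
  rcases Nat.even_or_odd (R.append B).length with hB | hB
  · exact ⟨u, _, hRB, hB⟩
  · refine ⟨u, _, hRA, ?_⟩
    rw [Nat.odd_iff] at hB hodd
    rw [Nat.even_iff]
    omega

end SimpleGraph.Walk

open SimpleGraph.Walk in
theorem even_cycle_of_intersecting_paths_general {V : Type*} (G : SimpleGraph V)
    (c₀ cᵢ p q : V) (C : G.Walk c₀ c₀) (hC : C.IsCycle) (hCodd : Odd C.length)
    (hci : cᵢ ∈ C.support) (hne : c₀ ≠ cᵢ)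
    (P : G.Walk c₀ p)
    (Q : G.Walk cᵢ q)
    (hPC : {x | x ∈ P.support} ∩ {x | x ∈ C.support} = {c₀})
    (hQC : {x | x ∈ Q.support} ∩ {x | x ∈ C.support} = {cᵢ})
    (hPQ : ∃ x, x ∈ P.support ∧ x ∈ Q.support) :
    ∃ (u : V) (c : G.Walk u u), c.IsCycle ∧ Even c.length := by
  classical
  obtain ⟨x, hxP, hxQ⟩ := hPQ
  set W := (P.takeUntil x hxP).append (Q.takeUntil x hxQ).reverse
  have hWsupport : ∀ z ∈ W.support, z ∈ P.support ∨ z ∈ Q.support := by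
    intro z hz
    rw [mem_support_append_iff, support_reverse, List.mem_reverse] at hz
    exact hz.imp (fun h => P.support_takeUntil_subset_support hxP h)
      (fun h => Q.support_takeUntil_subset_support hxQ h)
  have hWedge : s(c₀, cᵢ) ∉ W.edges := by
    rw [edges_append, edges_reverse, List.mem_append, List.mem_reverse]
    rintro (he | he)
    · exact hne (hPC.subset ⟨P.snd_mem_support_of_mem_edges
        (P.edges_takeUntil_subset_edges hxP he), hci⟩).symm
    · exact hne (hQC.subset ⟨Q.fst_mem_support_of_mem_edges
        (Q.edges_takeUntil_subset_edges hxQ he), C.start_mem_support⟩)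
  have hRlen : 1 < W.bypass.length :=
    one_lt_length_of_notMem_edges hne fun h => hWedge (W.edges_bypass_subset_edges h)
  refine hC.exists_isCycle_even_of_isPath hCodd hci W.bypass_isPath hRlen fun z hz hzC => ?_
  rcases hWsupport z (W.support_bypass_subset_support hz) with h | h
  exacts [.inl (hPC.subset ⟨h, hzC⟩), .inr (hQC.subset ⟨h, hzC⟩)]

theorem even_cycle_of_intersecting_paths {V : Type*} (G : SimpleGraph V)
    (hδ : ∀ u, 3 ≤ (G.neighborSet u).ncard)
    (hodd : ∀ (u : V) (c : G.Walk u u), c.IsCycle → Odd c.length)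
    (c₀ cᵢ p q : V) (C : G.Walk c₀ c₀) (hC : C.IsCycle) (hCodd : Odd C.length)
    (hci : cᵢ ∈ C.support) (hne : c₀ ≠ cᵢ)
    (P : G.Walk c₀ p) (hP : P.IsPath)
    (Q : G.Walk cᵢ q) (hQ : Q.IsPath)
    (hPC : {x | x ∈ P.support} ∩ {x | x ∈ C.support} = {c₀})
    (hQC : {x | x ∈ Q.support} ∩ {x | x ∈ C.support} = {cᵢ})
    (hPQ : ∃ x, x ∈ P.support ∧ x ∈ Q.support) :
    ∃ (u : V) (c : G.Walk u u), c.IsCycle ∧ Even c.length :=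
  even_cycle_of_intersecting_paths_general G c₀ cᵢ p q C hC hCodd hci hne P Q hPC hQC hPQ
end
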